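/- Let d ≥ 1, 0 < p ≤ u < ∞, 0 < q < ∞, s ∈ ℝ and c > 0. Let K ∈ S(ℝ^d) be a real-valued Schwartz function with K(y) ≥ c for all y with 5/4 ≤ |y| ≤ 7/4, and let ζ : ℝ^d → [0, ∞) be smooth with support contained in B(0, 1/8) and ∫_{ℝ^d} ζ(z) dz = 1. For k ∈ ℕ set K_k(x) := 2^{kd} K(2^k x), and for j ∈ ℕ set ζ_j(x) := ζ(2^j x). Then there exists a constant C > 0, independent of j, such that for every j ∈ ℕ: ‖ ( Σ_{k=1}^{j} 2^{ksq} |(K_k ∗ ζ_j)(·)|^q )^{1/q} ∣ M^u_p ‖ ≥ C · 2^{j(s − d/p)} · ( Σ_{ℓ=0}^{j−1} 2^{ℓ p (d(1/p − 1) − s)} )^{1/p}. -/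

import Mathlib

/-!
Fix `w` with `‖w‖ = 3/2` and, for `1 ≤ k ≤ j`, let `B_k` be the ball of radius `2^{-k}/8` around
`2^{-k} w`. Since `ζ_j` lives in `B(0, 2^{-j}/8) ⊆ B(0, 2^{-k}/8)`, for `x ∈ B_k` the kernel
`K(2^k (x - y))` is only evaluated on the annulus `5/4 ≤ |·| ≤ 7/4`, where `K ≥ c`; hence
`K_k ∗ ζ_j ≥ c 2^{(k-j)d}` on `B_k`. The balls `B_k` lie in the disjoint dyadic annuli
`2^{-k} < |x| < 2^{1-k}` inside `B(0, 2)`, so testing the Morrey norm on `B(0, 2)` and adding the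
contributions of the `B_k` gives the bound, after the substitution `ℓ = j - k`.
-/

open MeasureTheory Metric ENNReal

noncomputable def morreyNorm (d : ℕ) (p u : ℝ)
    (f : EuclideanSpace ℝ (Fin d) → ℝ≥0∞) : ℝ≥0∞ :=
  ⨆ (y : EuclideanSpace ℝ (Fin d)) (R : ℝ) (_ : 0 < R),
    volume (ball y R) ^ (1 / u - 1 / p) * (∫⁻ x in ball y R, f x ^ p) ^ (1 / p)

noncomputable def morreyNormC (d : ℕ) (p u : ℝ)
    (f : EuclideanSpace ℝ (Fin d) → ℂ) : ℝ≥0∞ :=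
  morreyNorm d p u fun x => (‖f x‖₊ : ℝ≥0∞)

lemma le_morreyNorm {d : ℕ} {p u R : ℝ} (f : EuclideanSpace ℝ (Fin d) → ℝ≥0∞)
    (y : EuclideanSpace ℝ (Fin d)) (hR : 0 < R) :
    volume (ball y R) ^ (1 / u - 1 / p) * (∫⁻ x in ball y R, f x ^ p) ^ (1 / p) ≤
      morreyNorm d p u f :=
  le_iSup_of_le y <| le_iSup_of_le R <| le_iSup_of_le hR le_rfl

lemma ENNReal.le_rpow_one_div_sum_of_rpow_le {ι : Type*} {s : Finset ι} {g : ι → ℝ≥0∞}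
    {a : ℝ≥0∞} {q : ℝ} (hq : 0 < q) {i : ι} (hi : i ∈ s) (h : a ^ q ≤ g i) :
    a ≤ (∑ i ∈ s, g i) ^ (1 / q) :=
  calc a = (a ^ q) ^ (1 / q) := by rw [← ENNReal.rpow_mul, mul_one_div_cancel hq.ne', rpow_one]
    _ ≤ (∑ i ∈ s, g i) ^ (1 / q) := by
      gcongr
      exact h.trans (Finset.single_le_sum (fun _ _ => zero_le) hi)

lemma sum_mul_measure_le_setLIntegral {α ι : Type*} [MeasurableSpace α] {μ : Measure α}
    {s : Finset ι} {A : ι → Set α} {S : Set α} {f : α → ℝ≥0∞} {b : ι → ℝ≥0∞}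
    (hA : ∀ i ∈ s, MeasurableSet (A i)) (hdisj : (s : Set ι).PairwiseDisjoint A)
    (hsub : ∀ i ∈ s, A i ⊆ S) (hf : ∀ i ∈ s, ∀ x ∈ A i, b i ≤ f x) :
    ∑ i ∈ s, b i * μ (A i) ≤ ∫⁻ x in S, f x ∂μ :=
  calc ∑ i ∈ s, b i * μ (A i) ≤ ∑ i ∈ s, ∫⁻ x in A i, f x ∂μ := by
        gcongr with i hi
        rw [← setLIntegral_const]
        exact setLIntegral_mono' (hA i hi) (hf i hi)
    _ = ∫⁻ x in ⋃ i ∈ s, A i, f x ∂μ := (lintegral_biUnion_finset hdisj hA f).symm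
    _ ≤ ∫⁻ x in S, f x ∂μ := lintegral_mono_set (Set.iUnion₂_subset hsub)

lemma mul_integral_le_integral_mul {α : Type*} [MeasurableSpace α] {μ : Measure α}
    {F g : α → ℝ} {c : ℝ} (hg : Integrable g μ) (hFg : Integrable (fun y => F y * g y) μ)
    (hg_nonneg : ∀ y, 0 ≤ g y) (hF : ∀ y, g y ≠ 0 → c ≤ F y) :
    c * ∫ y, g y ∂μ ≤ ∫ y, F y * g y ∂μ := by
  rw [← integral_const_mul]
  refine integral_mono (hg.const_mul c) hFg fun y => ?_
  rcases eq_or_ne (g y) 0 with h | h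
  · simp [h]
  · exact mul_le_mul_of_nonneg_right (hF y h) (hg_nonneg y)

section DyadicBall

variable {E : Type*} [NormedAddCommGroup E] [NormedSpace ℝ E]

def dyadicBall (w : E) (k : ℕ) : Set E := ball (((2 : ℝ) ^ k)⁻¹ • w) (((2 : ℝ) ^ k)⁻¹ / 8)

lemma norm_two_pow_smul_sub_mem_Ioo {w x y : E} {k : ℕ} (hw : ‖w‖ = 3 / 2)
    (hx : x ∈ dyadicBall w k) (hy : ‖(2 : ℝ) ^ k • y‖ < 1 / 8) :
    ‖(2 : ℝ) ^ k • (x - y)‖ ∈ Set.Ioo (5 / 4) (7 / 4) := by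
  have h2k : (0 : ℝ) < 2 ^ k := by positivity
  have hx' : ‖(2 : ℝ) ^ k • x - w‖ < 1 / 8 := by
    rw [dyadicBall, mem_ball, dist_eq_norm] at hx
    rw [show (2 : ℝ) ^ k • x - w = (2 : ℝ) ^ k • (x - ((2 : ℝ) ^ k)⁻¹ • w) by
      rw [smul_sub, smul_inv_smul₀ h2k.ne'], norm_smul, Real.norm_of_nonneg h2k.le]
    calc 2 ^ k * ‖x - ((2 : ℝ) ^ k)⁻¹ • w‖ < 2 ^ k * (((2 : ℝ) ^ k)⁻¹ / 8) := by gcongr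
      _ = 1 / 8 := by field_simp
  have hclose : ‖(2 : ℝ) ^ k • (x - y) - w‖ < 1 / 4 := by
    calc ‖(2 : ℝ) ^ k • (x - y) - w‖ = ‖((2 : ℝ) ^ k • x - w) - (2 : ℝ) ^ k • y‖ := by
          rw [smul_sub, sub_right_comm]
      _ ≤ ‖(2 : ℝ) ^ k • x - w‖ + ‖(2 : ℝ) ^ k • y‖ := norm_sub_le _ _
      _ < 1 / 4 := by linarith
  have := abs_norm_sub_norm_le ((2 : ℝ) ^ k • (x - y)) w
  rw [hw] at this
  constructor <;> linarith [abs_lt.mp (this.trans_lt hclose)]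

lemma two_pow_mul_norm_mem_Ioo {w x : E} {k : ℕ} (hw : ‖w‖ = 3 / 2) (hx : x ∈ dyadicBall w k) :
    2 ^ k * ‖x‖ ∈ Set.Ioo (1 : ℝ) 2 := by
  have h := norm_two_pow_smul_sub_mem_Ioo (y := 0) hw hx (by simp)
  rw [sub_zero, norm_smul, Real.norm_of_nonneg (by positivity)] at h
  exact ⟨by linarith [h.1], by linarith [h.2]⟩

open Function in
lemma pairwise_disjoint_dyadicBall {w : E} (hw : ‖w‖ = 3 / 2) :
    Pairwise (Disjoint on dyadicBall w) := by
  suffices ∀ k k', k < k' → Disjoint (dyadicBall w k) (dyadicBall w k') from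
    fun k k' hne => hne.lt_or_gt.elim (this k k') fun h => (this k' k h).symm
  intro k k' hlt
  refine Set.disjoint_left.mpr fun x hx hx' => ?_
  have hpow : (2 : ℝ) * 2 ^ k ≤ 2 ^ k' := by
    rw [← pow_succ']
    exact pow_le_pow_right₀ one_le_two hlt
  have h := two_pow_mul_norm_mem_Ioo hw hx
  have h' := two_pow_mul_norm_mem_Ioo hw hx'
  nlinarith [h.1, h'.2, norm_nonneg x]

lemma dyadicBall_subset_ball {w : E} (hw : ‖w‖ = 3 / 2) (k : ℕ) : dyadicBall w k ⊆ ball 0 2 := by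
  intro x hx
  have h := two_pow_mul_norm_mem_Ioo hw hx
  have h1 : (1 : ℝ) ≤ 2 ^ k := one_le_pow₀ one_le_two
  rw [mem_ball_zero_iff]
  nlinarith [h.2, norm_nonneg x]

end DyadicBall

section Convolution

variable {E : Type*} [NormedAddCommGroup E] [NormedSpace ℝ E] [MeasurableSpace E] [BorelSpace E]
  [FiniteDimensional ℝ E] (μ : Measure E) [μ.IsAddHaarMeasure]

lemma integral_comp_two_pow_smul {ζ : E → ℝ} (hζ_one : ∫ z, ζ z ∂μ = 1) (j : ℕ) :
    ∫ y, ζ ((2 : ℝ) ^ j • y) ∂μ = ((2 : ℝ) ^ (j * Module.finrank ℝ E))⁻¹ := by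
  rw [Measure.integral_comp_smul_of_nonneg μ ζ _ (hR := by positivity), hζ_one, smul_eq_mul,
    mul_one, pow_mul]

lemma le_integral_dilation_mul_dilation {K : BoundedContinuousFunction E ℝ} {ζ : E → ℝ} {c : ℝ}
    (hK : ∀ y : E, 5 / 4 ≤ ‖y‖ → ‖y‖ ≤ 7 / 4 → c ≤ K y) (hζ_nonneg : ∀ z, 0 ≤ ζ z)
    (hζ_supp : Function.support ζ ⊆ ball 0 (1 / 8)) (hζ_one : ∫ z, ζ z ∂μ = 1)
    {k j : ℕ} (hkj : k ≤ j) {w x : E} (hw : ‖w‖ = 3 / 2) (hx : x ∈ dyadicBall w k) :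
    c * 2 ^ (k * Module.finrank ℝ E) / 2 ^ (j * Module.finrank ℝ E) ≤
      ∫ y, (2 : ℝ) ^ (k * Module.finrank ℝ E) * K ((2 : ℝ) ^ k • (x - y)) *
        ζ ((2 : ℝ) ^ j • y) ∂μ := by
  have hζj_int : Integrable (fun y => ζ ((2 : ℝ) ^ j • y)) μ :=
    (Integrable.of_integral_ne_zero (by simp [hζ_one])).comp_smul (by positivity)
  have hK_int : Integrable (fun y => K ((2 : ℝ) ^ k • (x - y)) * ζ ((2 : ℝ) ^ j • y)) μ :=
    hζj_int.bdd_mul (f := fun y => K ((2 : ℝ) ^ k • (x - y))) (by fun_prop)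
      (ae_of_all _ fun _ => K.norm_coe_le_norm _)
  have hK_supp : ∀ y, ζ ((2 : ℝ) ^ j • y) ≠ 0 → c ≤ K ((2 : ℝ) ^ k • (x - y)) := by
    intro y hy
    have hyj : ‖(2 : ℝ) ^ j • y‖ < 1 / 8 := mem_ball_zero_iff.mp (hζ_supp hy)
    have hyk : ‖(2 : ℝ) ^ k • y‖ < 1 / 8 := by
      refine lt_of_le_of_lt ?_ hyj
      simp only [norm_smul, Real.norm_of_nonneg (pow_nonneg zero_le_two _)]
      gcongr
      exact one_le_two
    have h := norm_two_pow_smul_sub_mem_Ioo hw hx hyk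
    exact hK _ h.1.le h.2.le
  calc c * 2 ^ (k * Module.finrank ℝ E) / 2 ^ (j * Module.finrank ℝ E)
      = 2 ^ (k * Module.finrank ℝ E) * (c * ∫ y, ζ ((2 : ℝ) ^ j • y) ∂μ) := by
        rw [integral_comp_two_pow_smul μ hζ_one]; ring
    _ ≤ 2 ^ (k * Module.finrank ℝ E) * ∫ y, K ((2 : ℝ) ^ k • (x - y)) * ζ ((2 : ℝ) ^ j • y) ∂μ := by
        gcongr
        exact mul_integral_le_integral_mul hζj_int hK_int (fun _ => hζ_nonneg _) hK_supp
    _ = _ := by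
        rw [← integral_const_mul]
        simp only [mul_assoc]

end Convolution

lemma dyadic_term_eq {c p s : ℝ} (hp : p ≠ 0) (hc : 0 ≤ c) (d j k : ℕ) :
    ((2 : ℝ) ^ ((k : ℝ) * s) * (c * 2 ^ (k * d) / 2 ^ (j * d))) ^ p * ((((2 : ℝ) ^ k)⁻¹ / 8) ^ d) =
      c ^ p / 8 ^ d * (2 : ℝ) ^ ((j : ℝ) * (s * p - d)) *
        (2 : ℝ) ^ (((j : ℝ) - k) * p * (d * (1 / p - 1) - s)) := by
  have h2 : (0 : ℝ) < 2 := two_pos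
  have hbase : (2 : ℝ) ^ ((k : ℝ) * s) * (c * 2 ^ (k * d) / 2 ^ (j * d)) =
      c * 2 ^ ((k : ℝ) * s + k * d - j * d) := by
    rw [Real.rpow_sub h2, Real.rpow_add h2]
    norm_cast
    ring
  have hrad : (((2 : ℝ) ^ k)⁻¹ / 8) ^ d = (2 : ℝ) ^ (-((k : ℝ) * d)) / 8 ^ d := by
    rw [div_pow, Real.rpow_neg h2.le, inv_pow, ← pow_mul]
    norm_cast
  have hexp : ((k : ℝ) * s + k * d - j * d) * p + -((k : ℝ) * d) =
      (j : ℝ) * (s * p - d) + ((j : ℝ) - k) * p * (d * (1 / p - 1) - s) := by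
    field_simp
    ring
  rw [hbase, hrad, Real.mul_rpow hc (by positivity), ← Real.rpow_mul h2.le,
    mul_assoc (c ^ p / 8 ^ d), ← Real.rpow_add h2, ← hexp, Real.rpow_add h2]
  ring

lemma sum_Icc_comp_sub_eq_sum_range (g : ℝ → ℝ) (j : ℕ) :
    ∑ k ∈ Finset.Icc 1 j, g ((j : ℝ) - k) = ∑ ℓ ∈ Finset.range j, g ℓ := by
  refine Finset.sum_nbij' (fun k => j - k) (fun ℓ => j - ℓ) ?_ ?_ ?_ ?_ ?_ <;>
    intro k hk <;> simp only [Finset.mem_Icc, Finset.mem_range] at hk ⊢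
  · omega
  · omega
  · omega
  · omega
  · rw [Nat.cast_sub hk.2]

lemma sum_dyadic_terms_eq {c p s : ℝ} (hp : p ≠ 0) (hc : 0 ≤ c) (d j : ℕ) :
    ∑ k ∈ Finset.Icc 1 j,
        ((2 : ℝ) ^ ((k : ℝ) * s) * (c * 2 ^ (k * d) / 2 ^ (j * d))) ^ p *
          (((2 : ℝ) ^ k)⁻¹ / 8) ^ d =
      c ^ p / 8 ^ d * (2 : ℝ) ^ ((j : ℝ) * (s * p - d)) *
        ∑ ℓ ∈ Finset.range j, (2 : ℝ) ^ ((ℓ : ℝ) * p * (d * (1 / p - 1) - s)) := by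
  rw [← sum_Icc_comp_sub_eq_sum_range (fun t : ℝ => (2 : ℝ) ^ (t * p * (d * (1 / p - 1) - s))),
    Finset.mul_sum]
  exact Finset.sum_congr rfl fun k _ => dyadic_term_eq hp hc d j k

lemma rpow_one_div_dyadic_mass_eq {ω c p s S : ℝ} (hp : 0 < p) (hω : 0 ≤ ω) (hc : 0 ≤ c)
    (hS : 0 ≤ S) (d j : ℕ) :
    (ω * (c ^ p / 8 ^ d * 2 ^ ((j : ℝ) * (s * p - d)) * S)) ^ (1 / p) =
      (ω * c ^ p / 8 ^ d) ^ (1 / p) * 2 ^ ((j : ℝ) * (s - d / p)) * S ^ (1 / p) := by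
  have hpow : ((2 : ℝ) ^ ((j : ℝ) * (s * p - d))) ^ (1 / p) = 2 ^ ((j : ℝ) * (s - d / p)) := by
    rw [← Real.rpow_mul zero_le_two]
    field_simp
  rw [← hpow, ← Real.mul_rpow (by positivity) (by positivity),
    ← Real.mul_rpow (by positivity) hS]
  ring_nf

section Euclidean

variable {d : ℕ}

lemma ofReal_le_convolution_sum_of_mem_dyadicBall {q s c : ℝ} (hq : 0 < q) (hc : 0 ≤ c)
    {K : SchwartzMap (EuclideanSpace ℝ (Fin d)) ℝ}
    (hK : ∀ y : EuclideanSpace ℝ (Fin d), 5 / 4 ≤ ‖y‖ → ‖y‖ ≤ 7 / 4 → c ≤ K y)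
    {ζ : EuclideanSpace ℝ (Fin d) → ℝ} (hζ_nonneg : ∀ z, 0 ≤ ζ z)
    (hζ_supp : Function.support ζ ⊆ ball 0 (1 / 8)) (hζ_one : ∫ z, ζ z = 1)
    {w : EuclideanSpace ℝ (Fin d)} (hw : ‖w‖ = 3 / 2) {j k : ℕ} (hk : k ∈ Finset.Icc 1 j)
    {x : EuclideanSpace ℝ (Fin d)} (hx : x ∈ dyadicBall w k) :
    ENNReal.ofReal ((2 : ℝ) ^ ((k : ℝ) * s) * (c * 2 ^ (k * d) / 2 ^ (j * d))) ≤
      (∑ k ∈ Finset.Icc 1 j, ENNReal.ofReal ((2 : ℝ) ^ ((k : ℝ) * s * q) *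
        |∫ y, (2 : ℝ) ^ (k * d) * K ((2 : ℝ) ^ k • (x - y)) * ζ ((2 : ℝ) ^ j • y)| ^ q)) ^
        (1 / q) := by
  have hconv := le_integral_dilation_mul_dilation volume (K := K.toBoundedContinuousFunction)
    hK hζ_nonneg hζ_supp hζ_one (Finset.mem_Icc.mp hk).2 hw hx
  simp only [finrank_euclideanSpace_fin, SchwartzMap.toBoundedContinuousFunction_apply] at hconv
  refine ENNReal.le_rpow_one_div_sum_of_rpow_le hq hk ?_
  rw [ENNReal.ofReal_rpow_of_nonneg (by positivity) hq.le, Real.mul_rpow (by positivity)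
    (by positivity), ← Real.rpow_mul zero_le_two]
  gcongr
  exact hconv.trans (le_abs_self _)

lemma ofReal_dyadic_mass_le_setLIntegral {p c s : ℝ} (hp : 0 < p) (hc : 0 ≤ c)
    {w : EuclideanSpace ℝ (Fin d)} (hw : ‖w‖ = 3 / 2) {j : ℕ}
    {g : EuclideanSpace ℝ (Fin d) → ℝ≥0∞}
    (hg : ∀ k ∈ Finset.Icc 1 j, ∀ x ∈ dyadicBall w k,
      ENNReal.ofReal ((2 : ℝ) ^ ((k : ℝ) * s) * (c * 2 ^ (k * d) / 2 ^ (j * d))) ≤ g x) :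
    ENNReal.ofReal ((volume (ball (0 : EuclideanSpace ℝ (Fin d)) 1)).toReal *
        (c ^ p / 8 ^ d * 2 ^ ((j : ℝ) * (s * p - d)) *
          ∑ ℓ ∈ Finset.range j, (2 : ℝ) ^ ((ℓ : ℝ) * p * (d * (1 / p - 1) - s)))) ≤
      ∫⁻ x in ball 0 2, g x ^ p :=
  calc _ = ∑ k ∈ Finset.Icc 1 j,
        ENNReal.ofReal ((2 : ℝ) ^ ((k : ℝ) * s) * (c * 2 ^ (k * d) / 2 ^ (j * d))) ^ p *
          volume (dyadicBall w k) := by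
        rw [← sum_dyadic_terms_eq hp.ne' hc, Finset.mul_sum,
          ENNReal.ofReal_sum_of_nonneg fun k _ => by positivity]
        refine Finset.sum_congr rfl fun k _ => ?_
        rw [dyadicBall, Measure.addHaar_ball_of_pos volume (((2 : ℝ) ^ k)⁻¹ • w) (by positivity),
          finrank_euclideanSpace_fin, ENNReal.ofReal_rpow_of_nonneg (by positivity) hp.le,
          ENNReal.ofReal_mul ENNReal.toReal_nonneg, ENNReal.ofReal_mul (by positivity),
          ENNReal.ofReal_toReal measure_ball_lt_top.ne]
        ring
    _ ≤ ∫⁻ x in ball 0 2, g x ^ p :=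
        sum_mul_measure_le_setLIntegral (fun _ _ => measurableSet_ball)
          ((pairwise_disjoint_dyadicBall hw).set_pairwise _)
          (fun k _ => dyadicBall_subset_ball hw k) fun k hk x hx => by gcongr; exact hg k hk x hx

end Euclidean

theorem statement15_general (d : ℕ) (hd : 1 ≤ d) (p u q s : ℝ) (hp : 0 < p)
    (hq : 0 < q) (c : ℝ) (hc : 0 < c)
    (K : SchwartzMap (EuclideanSpace ℝ (Fin d)) ℝ)
    (hK : ∀ y : EuclideanSpace ℝ (Fin d), 5 / 4 ≤ ‖y‖ → ‖y‖ ≤ 7 / 4 → c ≤ K y)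
    (ζ : EuclideanSpace ℝ (Fin d) → ℝ)
    (hζ_nonneg : ∀ z, 0 ≤ ζ z)
    (hζ_supp : tsupport ζ ⊆ ball (0 : EuclideanSpace ℝ (Fin d)) (1 / 8))
    (hζ_one : ∫ z, ζ z = 1) :
    ∃ C : ℝ, 0 < C ∧ ∀ j : ℕ, 1 ≤ j →
      ENNReal.ofReal (C * (2 : ℝ) ^ ((j : ℝ) * (s - d / p)) *
          (∑ ℓ ∈ Finset.range j,
            (2 : ℝ) ^ ((ℓ : ℝ) * p * (d * (1 / p - 1) - s))) ^ (1 / p)) ≤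
        morreyNorm d p u (fun x =>
          (∑ k ∈ Finset.Icc 1 j, ENNReal.ofReal ((2 : ℝ) ^ ((k : ℝ) * s * q) *
              |∫ y, (2 : ℝ) ^ (k * d) * K ((2 : ℝ) ^ k • (x - y)) *
                ζ ((2 : ℝ) ^ j • y)| ^ q)) ^ (1 / q)) := by
  obtain ⟨w, hw⟩ : ∃ w : EuclideanSpace ℝ (Fin d), ‖w‖ = 3 / 2 :=
    haveI : Nonempty (Fin d) := ⟨⟨0, hd⟩⟩
    exists_norm_eq _ (by norm_num)
  set V := volume (ball (0 : EuclideanSpace ℝ (Fin d)) 2)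
  set ω := (volume (ball (0 : EuclideanSpace ℝ (Fin d)) 1)).toReal
  have hV : 0 < V.toReal :=
    ENNReal.toReal_pos (measure_ball_pos _ _ two_pos).ne' measure_ball_lt_top.ne
  have hω : 0 < ω := ENNReal.toReal_pos (measure_ball_pos _ _ one_pos).ne' measure_ball_lt_top.ne
  refine ⟨V.toReal ^ (1 / u - 1 / p) * (ω * c ^ p / 8 ^ d) ^ (1 / p), by positivity,
    fun j _ => ?_⟩
  have hS : 0 ≤ ∑ ℓ ∈ Finset.range j, (2 : ℝ) ^ ((ℓ : ℝ) * p * (d * (1 / p - 1) - s)) :=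
    Finset.sum_nonneg fun _ _ => by positivity
  rw [mul_assoc (V.toReal ^ _), mul_assoc (V.toReal ^ _),
    ← rpow_one_div_dyadic_mass_eq hp hω.le hc.le hS, ENNReal.ofReal_mul (by positivity), ← ENNReal.ofReal_rpow_of_pos hV,
    ENNReal.ofReal_toReal measure_ball_lt_top.ne,
    ← ENNReal.ofReal_rpow_of_nonneg (by positivity) (by positivity)]
  refine le_trans ?_ (le_morreyNorm _ 0 two_pos)
  gcongr
  exact ofReal_dyadic_mass_le_setLIntegral hp hc.le hw fun k hk x hx =>
    ofReal_le_convolution_sum_of_mem_dyadicBall hq hc.le hK hζ_nonneg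
      ((subset_tsupport ζ).trans hζ_supp) hζ_one hw hk hx

theorem statement15 (d : ℕ) (hd : 1 ≤ d) (p u q s : ℝ) (hp : 0 < p) (hpu : p ≤ u)
    (hq : 0 < q) (c : ℝ) (hc : 0 < c)
    (K : SchwartzMap (EuclideanSpace ℝ (Fin d)) ℝ)
    (hK : ∀ y : EuclideanSpace ℝ (Fin d), 5 / 4 ≤ ‖y‖ → ‖y‖ ≤ 7 / 4 → c ≤ K y)
    (ζ : EuclideanSpace ℝ (Fin d) → ℝ) (hζ_smooth : ContDiff ℝ (⊤ : ℕ∞) ζ)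
    (hζ_nonneg : ∀ z, 0 ≤ ζ z)
    (hζ_supp : tsupport ζ ⊆ ball (0 : EuclideanSpace ℝ (Fin d)) (1 / 8))
    (hζ_one : ∫ z, ζ z = 1) :
    ∃ C : ℝ, 0 < C ∧ ∀ j : ℕ, 1 ≤ j →
      ENNReal.ofReal (C * (2 : ℝ) ^ ((j : ℝ) * (s - d / p)) *
          (∑ ℓ ∈ Finset.range j,
            (2 : ℝ) ^ ((ℓ : ℝ) * p * (d * (1 / p - 1) - s))) ^ (1 / p)) ≤
        morreyNorm d p u (fun x =>
          (∑ k ∈ Finset.Icc 1 j, ENNReal.ofReal ((2 : ℝ) ^ ((k : ℝ) * s * q) *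
              |∫ y, (2 : ℝ) ^ (k * d) * K ((2 : ℝ) ^ k • (x - y)) *
                ζ ((2 : ℝ) ^ j • y)| ^ q)) ^ (1 / q)) :=
  statement15_general d hd p u q s hp hq c hc K hK ζ hζ_nonneg hζ_supp hζ_one
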